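/- For 1 < α < 2 with dom Ψ = ℝ_{< c_α}, the maximizer of z ↦ cz − D_Ψ(z|x) over dom Ψ equals Φ'(c + Ψ'(x)) = ln_{α,c}(c + exp_{α,c}(x)), where Ψ'(x) = exp_{α,c}(x) and Φ' = ln_{α,c} is the inverse of Ψ' on the appropriate domains; consequently L_Ψ(c, x) = ln_{α,c}(c + exp_{α,c}(x)) is well defined for all x < c_α and c > 0, recovering the extended logistic loss. -/

import Mathlib

/-!
Ψ' = exp_{α,c} and ln_{α,c} inverts it, so w := ln_{α,c}(c + exp_{α,c}(x)) lies in dom Ψ and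
satisfies Ψ'(w) = c + Ψ'(x). Then the objective z ↦ cz − D_Ψ(z|x) falls short of its value at w
by exactly the Bregman divergence D_Ψ(z|w), which strict convexity of Ψ makes positive for z ≠ w.
-/

/-- For 1 < α < 2: exp_{α,c}(x) = ((1-α)(x - c_α))^{1/(1-α)} (real power;
(1-α)(x-c_α) > 0 for x < c_α). -/
noncomputable def extExpC (α cα x : ℝ) : ℝ := ((1 - α) * (x - cα)) ^ (1 / (1 - α))

/-- For 1 < α < 2: ln_{α,c}(y) = c_α - y^{1-α}/(α-1) on ℝ₊₊. -/
noncomputable def extLnC (α cα y : ℝ) : ℝ := cα - y ^ (1 - α) / (α - 1)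

/-- Ψ(x) = (1/(2-α))((1-α)(x - c_α))^{(2-α)/(1-α)}. -/
noncomputable def PsiC (α cα x : ℝ) : ℝ :=
  (1 / (2 - α)) * ((1 - α) * (x - cα)) ^ ((2 - α) / (1 - α))

/-- Bregman divergence D_Ψ(z|x) = Ψ(z) - Ψ(x) - Ψ'(x)(z - x), Ψ' = exp_{α,c}. -/
noncomputable def DPsi (α cα z x : ℝ) : ℝ :=
  PsiC α cα z - PsiC α cα x - extExpC α cα x * (z - x)

open Set

theorem StrictConvexOn.add_mul_sub_lt_of_hasDerivAt {S : Set ℝ} {f : ℝ → ℝ} {f' w z : ℝ}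
    (hf : StrictConvexOn ℝ S f) (hw : w ∈ S) (hz : z ∈ S) (hne : z ≠ w)
    (hd : HasDerivAt f f' w) : f w + f' * (z - w) < f z := by
  rcases hne.lt_or_gt with hzw | hwz
  · have hslope := hf.slope_lt_of_hasDerivAt hz hw hzw hd
    rw [slope_def_field, div_lt_iff₀ (sub_pos.2 hzw)] at hslope
    linarith
  · have hslope := hf.lt_slope_of_hasDerivAt hw hz hwz hd
    rw [slope_def_field, lt_div_iff₀ (sub_pos.2 hwz)] at hslope
    linarith

variable {α cα : ℝ}

lemma one_sub_mul_sub_pos (h1 : 1 < α) {t : ℝ} (ht : t < cα) : 0 < (1 - α) * (t - cα) :=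
  mul_pos_of_neg_of_neg (by linarith) (by linarith)

lemma extExpC_pos (h1 : 1 < α) {t : ℝ} (ht : t < cα) : 0 < extExpC α cα t :=
  Real.rpow_pos_of_pos (one_sub_mul_sub_pos h1 ht) _

lemma hasDerivAt_PsiC (h1 : 1 < α) (h2 : α ≠ 2) {t : ℝ} (ht : t < cα) :
    HasDerivAt (PsiC α cα) (extExpC α cα t) t := by
  have hinner : HasDerivAt (fun s : ℝ => (1 - α) * (s - cα)) (1 - α) t := by
    simpa using ((hasDerivAt_id t).sub_const cα).const_mul (1 - α)
  have hPsi := ((Real.hasDerivAt_rpow_const (p := (2 - α) / (1 - α))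
    (Or.inl (one_sub_mul_sub_pos h1 ht).ne')).comp t hinner).const_mul (1 / (2 - α))
  refine hPsi.congr_deriv ?_
  have h1α : (1 : ℝ) - α ≠ 0 := by linarith
  have h2α : (2 : ℝ) - α ≠ 0 := sub_ne_zero.2 h2.symm
  have hexponent : (2 - α) / (1 - α) - 1 = 1 / (1 - α) := by field_simp; ring
  rw [extExpC, ← hexponent]
  field_simp

lemma strictMonoOn_extExpC (h1 : 1 < α) : StrictMonoOn (extExpC α cα) (Iio cα) := by
  intro s _ t ht hst
  have hbase : (1 - α) * (t - cα) < (1 - α) * (s - cα) :=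
    mul_lt_mul_of_neg_left (by linarith) (by linarith)
  exact Real.rpow_lt_rpow_of_neg (one_sub_mul_sub_pos h1 ht) hbase
    (div_neg_of_pos_of_neg one_pos (by linarith))

lemma strictConvexOn_PsiC (h1 : 1 < α) (h2 : α ≠ 2) :
    StrictConvexOn ℝ (Iio cα) (PsiC α cα) := by
  apply StrictMonoOn.strictConvexOn_of_deriv (convex_Iio cα)
  · exact fun t ht => (hasDerivAt_PsiC h1 h2 ht).continuousAt.continuousWithinAt
  · rw [interior_Iio]
    intro s hs t ht hst
    rw [(hasDerivAt_PsiC h1 h2 hs).deriv, (hasDerivAt_PsiC h1 h2 ht).deriv]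
    exact strictMonoOn_extExpC h1 hs ht hst

lemma DPsi_pos (h1 : 1 < α) (h2 : α ≠ 2) {z w : ℝ} (hz : z < cα) (hw : w < cα)
    (hne : z ≠ w) : 0 < DPsi α cα z w := by
  have := (strictConvexOn_PsiC h1 h2).add_mul_sub_lt_of_hasDerivAt hw hz hne
    (hasDerivAt_PsiC h1 h2 hw)
  rw [DPsi]
  linarith

lemma extLnC_lt (h1 : 1 < α) {y : ℝ} (hy : 0 < y) : extLnC α cα y < cα := by
  have : 0 < y ^ (1 - α) / (α - 1) := div_pos (Real.rpow_pos_of_pos hy _) (by linarith)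
  rw [extLnC]
  linarith

lemma extExpC_extLnC (h1 : α ≠ 1) {y : ℝ} (hy : 0 < y) :
    extExpC α cα (extLnC α cα y) = y := by
  have h1α : (1 : ℝ) - α ≠ 0 := sub_ne_zero.2 h1.symm
  have hα1 : α - 1 ≠ 0 := sub_ne_zero.2 h1
  have hbase : (1 - α) * (extLnC α cα y - cα) = y ^ (1 - α) := by
    rw [extLnC]
    field_simp
    ring
  rw [extExpC, hbase, ← Real.rpow_mul hy.le, mul_one_div_cancel h1α, Real.rpow_one]

lemma sub_sub_DPsi_eq_DPsi {c x w : ℝ} (hw : extExpC α cα w = c + extExpC α cα x) (z : ℝ) :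
    (c * w - DPsi α cα w x) - (c * z - DPsi α cα z x) = DPsi α cα z w := by
  simp only [DPsi, hw]
  ring

/-- For 1 < α < 2, c > 0, c_α = c^{1-α}/(α-1) and dom Ψ = ℝ_{<c_α}: the
maximizer of z ↦ cz - D_Ψ(z|x) over dom Ψ is ln_{α,c}(c + exp_{α,c}(x)), which
lies in dom Ψ; hence L_Ψ(c,x) = ln_{α,c}(c + exp_{α,c}(x)) is well defined for
all x < c_α, recovering the extended logistic loss. -/
theorem stmt19 (α c : ℝ) (h1 : 1 < α) (h2 : α < 2) (hc : 0 < c) (x : ℝ)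
    (hx : x < c ^ (1 - α) / (α - 1)) :
    let cα : ℝ := c ^ (1 - α) / (α - 1)
    extLnC α cα (c + extExpC α cα x) ∈ Set.Iio cα ∧
    IsMaxOn (fun z => c * z - DPsi α cα z x) (Set.Iio cα)
      (extLnC α cα (c + extExpC α cα x)) ∧
    (∀ z ∈ Set.Iio cα, c * z - DPsi α cα z x =
        c * extLnC α cα (c + extExpC α cα x) -
          DPsi α cα (extLnC α cα (c + extExpC α cα x)) x →
      z = extLnC α cα (c + extExpC α cα x)) := by
  intro cα
  have hy : 0 < c + extExpC α cα x := add_pos hc (extExpC_pos h1 hx)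
  set w := extLnC α cα (c + extExpC α cα x)
  have hw : w < cα := extLnC_lt h1 hy
  have hgap := sub_sub_DPsi_eq_DPsi (extExpC_extLnC h1.ne' hy)
  refine ⟨hw, fun z hz => ?_, fun z hz heq => ?_⟩
  · show c * z - DPsi α cα z x ≤ c * w - DPsi α cα w x
    rcases eq_or_ne z w with rfl | hne
    · exact le_rfl
    · have := DPsi_pos h1 h2.ne hz hw hne
      have := hgap z
      linarith
  · by_contra hne
    have := DPsi_pos h1 h2.ne hz hw hne
    have := hgap z
    linarith
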